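/- For any R > 0, the sum of |\widehat{1_S}(χ)|³ over all characters χ of (ℤ/nℤ)ⁿ with entropy H(χ) ≥ R is at most exp((3−R)n/2) · (n!/nⁿ)³. -/

import Mathlib

/-!
The set `S` of injective tuples is invariant under permuting coordinates, hence so is
`\widehat{1_S}`. The orbit of a character `r` under these permutations has
`n! / ∏ aᵥ! = exp (n H(r))` elements, so Parseval gives
`|\widehat{1_S}(r)|² ≤ exp (-n H(r)) n!/nⁿ`. Together with `n!/nⁿ ≥ exp (-n)` this bounds
`|\widehat{1_S}(r)|` by `exp ((1 - R) n/2) n!/nⁿ` when `H(r) ≥ R`, and the sum of cubes is at most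
this bound times the Parseval sum `n!/nⁿ`.
-/

open Finset

/-- `e(x) = exp(2πi x/n)` for `x ∈ ZMod n`, realizing the identification of the dual of
`ZMod n` with `(1/n)ℤ/ℤ`. -/
noncomputable def eZ (n : ℕ) (x : ZMod n) : ℂ :=
  Complex.exp (2 * Real.pi * Complex.I * (x.val : ℂ) / (n : ℂ))

/-- The Fourier coefficient `\widehat{1_S}(r₁,…,r_n)` of the set `S` of injective
`n`-tuples in `(ZMod n)ⁿ`, namely `n^{-n} ∑_{x ∈ S} e(-∑ᵢ rᵢ xᵢ)`. -/
noncomputable def fourierS (n : ℕ) [NeZero n] (r : Fin n → ZMod n) : ℂ :=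
  ((n : ℂ) ^ n)⁻¹ *
    ∑ x ∈ Finset.univ.filter (fun x : Fin n → ZMod n => Function.Injective x),
      eZ n (-(∑ i, r i * x i))

/-- The entropy `H(χ) = (1/n) log multinomial(n; a₁,…,a_k)`, where the `aᵥ` are the
multiplicities of the values of `χ`. -/
noncomputable def entropyH (n : ℕ) [NeZero n] (r : Fin n → ZMod n) : ℝ :=
  Real.log ((n.factorial : ℝ) /
    ∏ v : ZMod n, ((Finset.univ.filter (fun i => r i = v)).card.factorial : ℝ)) / n

open Equiv MulAction

section Characters

variable {n : ℕ} [NeZero n] {ι : Type*} [Fintype ι]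

lemma eZ_eq_stdAddChar (x : ZMod n) : eZ n x = ZMod.stdAddChar x := by
  rw [ZMod.stdAddChar_apply, ZMod.toCircle_apply]
  rfl

lemma eZ_neg_mul_conj_eZ_neg (a b : ZMod n) :
    eZ n (-a) * starRingEnd ℂ (eZ n (-b)) = eZ n (b - a) := by
  simp only [eZ_eq_stdAddChar, ← AddChar.map_neg_eq_conj, ← AddChar.map_add_eq_mul, neg_neg,
    neg_add_eq_sub]

lemma sum_eZ_dotProduct [DecidableEq ι] (c : ι → ZMod n) :
    ∑ r : ι → ZMod n, eZ n (∑ i, r i * c i) = if c = 0 then (n : ℂ) ^ Fintype.card ι else 0 := by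
  let ψ : AddChar (ι → ZMod n) ℂ :=
    ZMod.stdAddChar.compAddMonoidHom (AddMonoidHom.mk' (· ⬝ᵥ c) fun a b => add_dotProduct a b c)
  have hψ : ψ = 0 ↔ c = 0 := by
    refine ⟨fun h => funext fun i => ZMod.injective_stdAddChar ?_, fun h => ?_⟩
    · simpa [ψ, dotProduct, Pi.single_apply] using DFunLike.congr_fun h (Pi.single i 1)
    · ext r
      simp [ψ, h]
  have := AddChar.sum_eq_ite ψ
  simp only [hψ, Fintype.card_pi, ZMod.card, prod_const, card_univ] at this
  convert this using 2 with r
  · simp [ψ, eZ_eq_stdAddChar, dotProduct]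
  · push_cast; rfl

lemma sum_norm_sq_sum_eZ [DecidableEq ι] (A : Finset (ι → ZMod n)) :
    ∑ r : ι → ZMod n, ‖∑ x ∈ A, eZ n (-(∑ i, r i * x i))‖ ^ 2
      = (n : ℝ) ^ Fintype.card ι * #A := by
  have hsq (r : ι → ZMod n) : (‖∑ x ∈ A, eZ n (-(∑ i, r i * x i))‖ : ℂ) ^ 2
      = ∑ x ∈ A, ∑ y ∈ A, eZ n (∑ i, r i * (y - x) i) := by
    simp only [← Complex.mul_conj', map_sum, sum_mul_sum,
      eZ_neg_mul_conj_eZ_neg, Pi.sub_apply, mul_sub, sum_sub_distrib]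
  have hinner (x : ι → ZMod n) (hx : x ∈ A) :
      ∑ r : ι → ZMod n, ∑ y ∈ A, eZ n (∑ i, r i * (y - x) i) = (n : ℂ) ^ Fintype.card ι := by
    rw [sum_comm]
    simp only [sum_eZ_dotProduct, sub_eq_zero, sum_ite_eq', if_pos hx]
  apply Complex.ofReal_injective
  push_cast
  simp only [hsq]
  rw [sum_comm, sum_congr rfl hinner]
  simp [mul_comm]

end Characters

lemma card_filter_injective (α β : Type*) [Fintype α] [Fintype β] [DecidableEq α]
    [DecidableEq β] :
    #{x : α → β | Function.Injective x} = (Fintype.card β).descFactorial (Fintype.card α) := by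
  rw [← Fintype.card_subtype, Fintype.card_congr (subtypeInjectiveEquivEmbedding α β),
    Fintype.card_embedding_eq]

section FourierS

variable {n : ℕ} [NeZero n]

lemma sum_norm_fourierS_sq :
    ∑ r : Fin n → ZMod n, ‖fourierS n r‖ ^ 2 = (n.factorial : ℝ) / (n : ℝ) ^ n := by
  simp only [fourierS, norm_mul, norm_inv, norm_pow, Complex.norm_natCast, mul_pow, ← mul_sum,
    sum_norm_sq_sum_eZ, card_filter_injective, Fintype.card_fin, ZMod.card,
    Nat.descFactorial_self]
  field_simp

lemma fourierS_comp_perm (r : Fin n → ZMod n) (σ : Perm (Fin n)) :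
    fourierS n (r ∘ σ) = fourierS n r := by
  simp only [fourierS, sum_filter]
  congr 1
  refine Fintype.sum_equiv (arrowCongr σ (Equiv.refl _)) _ _ fun x => ?_
  have hx : arrowCongr σ (Equiv.refl _) x = x ∘ σ.symm := rfl
  simp only [hx, Equiv.injective_comp, ← Equiv.sum_comp σ (fun i => r i * (x ∘ σ.symm) i)]
  simp

end FourierS

-- `(Perm α)ᵈᵐᵃ` acts on `α → ι` by precomposition.
lemma ncard_orbit_perm_mul_prod_factorial {α ι : Type*} [Fintype α] [DecidableEq α] [Fintype ι]
    [DecidableEq ι] (f : α → ι) :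
    (orbit (Perm α)ᵈᵐᵃ f).ncard * ∏ i, (Fintype.card {a // f a = i}).factorial
      = (Fintype.card α).factorial := by
  rw [← DomMulAct.stabilizer_card, ← Fintype.card_perm, ← Nat.card_eq_fintype_card,
    ← Nat.card_eq_fintype_card, ← index_stabilizer, Nat.card_congr (DomMulAct.mk (M := Perm α)),
    ← (stabilizer (Perm α)ᵈᵐᵃ f).index_mul_card]
  congr 1
  exact Nat.card_congr (subtypeEquiv DomMulAct.mk fun _ => DomMulAct.mem_stabilizer_iff.symm)

section Entropy

variable {n : ℕ} [NeZero n]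

lemma exp_mul_entropyH (r : Fin n → ZMod n) :
    Real.exp (n * entropyH n r) = (orbit (Perm (Fin n))ᵈᵐᵃ r).ncard := by
  have hprod := ncard_orbit_perm_mul_prod_factorial r
  simp only [Fintype.card_fin, Fintype.card_subtype] at hprod
  rw [entropyH, mul_div_cancel₀ _ (NeZero.ne _), Real.exp_log (by positivity), ← hprod]
  push_cast
  field_simp

lemma norm_fourierS_sq_mul_exp_entropyH_le (r : Fin n → ZMod n) :
    ‖fourierS n r‖ ^ 2 * Real.exp (n * entropyH n r) ≤ (n.factorial : ℝ) / (n : ℝ) ^ n := by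
  classical
  have horbit (r' : Fin n → ZMod n) (hr' : r' ∈ (orbit (Perm (Fin n))ᵈᵐᵃ r).toFinset) :
      fourierS n r' = fourierS n r := by
    obtain ⟨g, rfl⟩ := Set.mem_toFinset.mp hr'
    exact fourierS_comp_perm r (DomMulAct.mk.symm g)
  calc ‖fourierS n r‖ ^ 2 * Real.exp (n * entropyH n r)
      = ∑ r' ∈ (orbit (Perm (Fin n))ᵈᵐᵃ r).toFinset, ‖fourierS n r'‖ ^ 2 := by
        rw [exp_mul_entropyH, sum_congr rfl fun r' h => by rw [horbit r' h], sum_const,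
          nsmul_eq_mul, Set.ncard_eq_toFinset_card', mul_comm]
    _ ≤ ∑ r', ‖fourierS n r'‖ ^ 2 := sum_le_univ_sum_of_nonneg fun _ => by positivity
    _ = (n.factorial : ℝ) / (n : ℝ) ^ n := sum_norm_fourierS_sq

end Entropy

lemma one_le_exp_mul_factorial_div_pow (n : ℕ) :
    1 ≤ Real.exp n * ((n.factorial : ℝ) / (n : ℝ) ^ n) := by
  rcases n.eq_zero_or_pos with rfl | hn
  · simp
  have h := Real.pow_div_factorial_le_exp (n : ℝ) n.cast_nonneg n
  rw [div_le_iff₀ (by positivity)] at h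
  rw [mul_div_assoc', le_div_iff₀ (by positivity), one_mul]
  linarith

lemma norm_fourierS_le_of_le_entropyH {n : ℕ} [NeZero n] {R : ℝ} {r : Fin n → ZMod n}
    (hr : R ≤ entropyH n r) :
    ‖fourierS n r‖ ≤ Real.exp ((1 - R) * n / 2) * ((n.factorial : ℝ) / (n : ℝ) ^ n) := by
  set Q : ℝ := (n.factorial : ℝ) / (n : ℝ) ^ n
  have hexp : Real.exp (R * n) ≤ Real.exp (n * entropyH n r) := by
    rw [mul_comm]
    gcongr
  have hsq : ‖fourierS n r‖ ^ 2 * Real.exp (R * n) ≤ Q :=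
    le_trans (by gcongr) (norm_fourierS_sq_mul_exp_entropyH_le r)
  have hsplit : Real.exp (-(R * n)) * Real.exp n = Real.exp ((1 - R) * n / 2) ^ 2 := by
    rw [← Real.exp_add, sq, ← Real.exp_add]
    ring_nf
  refine le_of_pow_le_pow_left₀ two_ne_zero (by positivity) ?_
  calc ‖fourierS n r‖ ^ 2 ≤ Real.exp (-(R * n)) * Q := by
        rwa [Real.exp_neg, ← div_eq_inv_mul, le_div_iff₀ (Real.exp_pos _)]
    _ ≤ Real.exp (-(R * n)) * Q * (Real.exp n * Q) :=
        le_mul_of_one_le_right (by positivity) (one_le_exp_mul_factorial_div_pow n)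
    _ = (Real.exp ((1 - R) * n / 2) * Q) ^ 2 := by
        rw [mul_pow, ← hsplit]
        ring

theorem high_entropy_minor_arcs_general (n : ℕ) [NeZero n] (R : ℝ) :
    ∑ r ∈ Finset.univ.filter (fun r : Fin n → ZMod n => R ≤ entropyH n r),
        ‖fourierS n r‖ ^ 3 ≤
      Real.exp ((3 - R) * n / 2) * ((n.factorial : ℝ) / (n : ℝ) ^ n) ^ 3 := by
  set Q : ℝ := (n.factorial : ℝ) / (n : ℝ) ^ n
  set B : ℝ := Real.exp ((1 - R) * n / 2) * Q
  calc ∑ r ∈ univ.filter (fun r : Fin n → ZMod n => R ≤ entropyH n r), ‖fourierS n r‖ ^ 3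
      ≤ ∑ r ∈ univ.filter (fun r : Fin n → ZMod n => R ≤ entropyH n r),
          B * ‖fourierS n r‖ ^ 2 := by
        refine sum_le_sum fun r hr => ?_
        rw [pow_succ' _ 2]
        exact mul_le_mul_of_nonneg_right
          (norm_fourierS_le_of_le_entropyH (mem_filter.mp hr).2) (by positivity)
    _ ≤ B * Q := by
        rw [← mul_sum]
        gcongr
        exact (sum_le_univ_sum_of_nonneg fun _ => by positivity).trans sum_norm_fourierS_sq.le
    _ ≤ B * Q * (Real.exp n * Q) :=
        le_mul_of_one_le_right (by positivity) (one_le_exp_mul_factorial_div_pow n)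
    _ = Real.exp ((3 - R) * n / 2) * Q ^ 3 := by
        rw [show (3 - R) * n / 2 = (1 - R) * n / 2 + n by ring, Real.exp_add]
        ring

/-- High-entropy minor arc bound: for any `R`, the sum of `|\widehat{1_S}(χ)|³` over
characters of entropy at least `R` is at most `exp((3-R)n/2)(n!/nⁿ)³`. -/
theorem high_entropy_minor_arcs (n : ℕ) [NeZero n] (R : ℝ) (hR : 0 < R) :
    ∑ r ∈ Finset.univ.filter (fun r : Fin n → ZMod n => R ≤ entropyH n r),
        ‖fourierS n r‖ ^ 3 ≤
      Real.exp ((3 - R) * n / 2) * ((n.factorial : ℝ) / (n : ℝ) ^ n) ^ 3 :=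
  high_entropy_minor_arcs_general n R
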